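/- Let μ > 0, and let f̃ : [0,∞)×ℝ² → ℝ and g̃ : [0,∞)×ℝ² → (0,∞) be continuous with g̃ positive-valued. Define V(x) := (2/(μ²+2−μ√(μ²+4)))·(x₁² + (x₂+μx₁)²) and k(t,x) := −((1+μ²)x₁ + 2μx₂ + f̃(t,x))/g̃(t,x). Then for all (t,x) ∈ [0,∞)×ℝ²: ∂V/∂x₁(x)·x₂ + ∂V/∂x₂(x)·(f̃(t,x) + g̃(t,x)·k(t,x)) = −2μ·V(x). -/

import Mathlib

/-!
In the coordinates `x₀` and `s = x₁ + μ x₀` the closed loop reads `ẋ₀ = s - μ x₀`,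
`ṡ = -x₀ - μ s`: a rotation plus the contraction `-μ`. The rotation leaves `x₀² + s²`
unchanged, so this quadratic form, and any multiple of it such as `V12 μ`, decays at the
rate `2μ`.
-/

noncomputable def V12 (μ : ℝ) (x : EuclideanSpace ℝ (Fin 2)) : ℝ :=
  (2 / (μ ^ 2 + 2 - μ * Real.sqrt (μ ^ 2 + 4))) * ((x 0) ^ 2 + (x 1 + μ * x 0) ^ 2)

noncomputable def k12 (μ : ℝ) (ftil gtil : ℝ → EuclideanSpace ℝ (Fin 2) → ℝ)
    (t : ℝ) (x : EuclideanSpace ℝ (Fin 2)) : ℝ :=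
  -(((1 + μ ^ 2) * x 0 + 2 * μ * x 1 + ftil t x) / gtil t x)

theorem fderiv_V12_apply (μ : ℝ) (x v : EuclideanSpace ℝ (Fin 2)) :
    fderiv ℝ (V12 μ) x v = 2 / (μ ^ 2 + 2 - μ * Real.sqrt (μ ^ 2 + 4)) *
      (2 * x 0 * v 0 + 2 * (x 1 + μ * x 0) * (v 1 + μ * v 0)) := by
  have h0 := (EuclideanSpace.proj (0 : Fin 2) : EuclideanSpace ℝ (Fin 2) →L[ℝ] ℝ).hasFDerivAt
    (x := x)
  have h1 := (EuclideanSpace.proj (1 : Fin 2) : EuclideanSpace ℝ (Fin 2) →L[ℝ] ℝ).hasFDerivAt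
    (x := x)
  have hV := ((h0.pow 2).add ((h1.add (h0.const_mul μ)).pow 2)).const_mul
    (2 / (μ ^ 2 + 2 - μ * Real.sqrt (μ ^ 2 + 4)))
  rw [(show HasFDerivAt (V12 μ) _ x from hV).fderiv]
  simp only [Fin.isValue, PiLp.proj_apply, Nat.add_one_sub_one, pow_one, nsmul_eq_mul,
    Nat.cast_ofNat, EuclideanSpace.coe_proj, Pi.add_apply, smul_add,
    add_apply, smul_apply, smul_eq_mul]
  ring

theorem add_mul_k12 (μ : ℝ) (ftil gtil : ℝ → EuclideanSpace ℝ (Fin 2) → ℝ) (t : ℝ)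
    (x : EuclideanSpace ℝ (Fin 2)) (hg : gtil t x ≠ 0) :
    ftil t x + gtil t x * k12 μ ftil gtil t x = -((1 + μ ^ 2) * x 0 + 2 * μ * x 1) := by
  rw [k12, mul_neg, mul_div_cancel₀ _ hg]
  ring

theorem stmt_12_general (μ : ℝ)
    (ftil gtil : ℝ → EuclideanSpace ℝ (Fin 2) → ℝ)
    (hgpos : ∀ t x, 0 < gtil t x) :
    ∀ t ≥ (0 : ℝ), ∀ x : EuclideanSpace ℝ (Fin 2),
      fderiv ℝ (V12 μ) x (EuclideanSpace.single 0 1) * x 1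
        + fderiv ℝ (V12 μ) x (EuclideanSpace.single 1 1)
            * (ftil t x + gtil t x * k12 μ ftil gtil t x)
        = -(2 * μ) * V12 μ x := by
  intro t _ x
  rw [add_mul_k12 μ ftil gtil t x (hgpos t x).ne', fderiv_V12_apply, fderiv_V12_apply, V12]
  simp only [PiLp.single_apply, Fin.isValue, if_true, Fin.reduceEq, if_false]
  ring

theorem stmt_12 (μ : ℝ) (hμ : 0 < μ)
    (ftil gtil : ℝ → EuclideanSpace ℝ (Fin 2) → ℝ)
    (hfc : Continuous fun p : ℝ × EuclideanSpace ℝ (Fin 2) => ftil p.1 p.2)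
    (hgc : Continuous fun p : ℝ × EuclideanSpace ℝ (Fin 2) => gtil p.1 p.2)
    (hgpos : ∀ t x, 0 < gtil t x) :
    ∀ t ≥ (0 : ℝ), ∀ x : EuclideanSpace ℝ (Fin 2),
      fderiv ℝ (V12 μ) x (EuclideanSpace.single 0 1) * x 1
        + fderiv ℝ (V12 μ) x (EuclideanSpace.single 1 1)
            * (ftil t x + gtil t x * k12 μ ftil gtil t x)
        = -(2 * μ) * V12 μ x :=
  stmt_12_general μ ftil gtil hgpos
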